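/- Fix c₊, c₋ > 0, a₊, a₋ ≥ c₀ > 0, φ₀ ∈ (π/3, π/2), φ ∈ (0, φ₀ − π/3). Define for λ ∈ Σ_{π−φ₀}, z ∈ Σ_φ, δ, σ ≥ 0, κ ≥ 1: m(λ,z) = λ + κ + (σz + δ(λ+κ))(√c₊ ω₊ + √c₋ ω₋) + a₊√c₊ ω₊ + a₋√c₋ ω₋, with ω_± = √(λ+κ+c_± z). Then there is a constant c₂ > 0 (independent of λ, z, δ ∈ [0,δ*], σ ∈ [0,σ*], κ ≥ 1) such that |m(λ,z)| ≥ c₂ [ |λ| + κ + σ|z|(√|λ| + √κ + √(c₊|z|) + √(c₋|z|)) + δ(|λ|+κ)(√|λ| + √κ + √(c₊|z|) + √(c₋|z|)) + a₊(√|λ| + √κ + √(c₊|z|)) + a₋(√|λ| + √κ + √(c₋|z|)) ]. -/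

import Mathlib

/-!
Write `A = λ + κ`, `D± = A + c± z` and `ω± = √D±`. Then `m` is `A` plus nonnegative real
multiples of `ω±`, `A ω±` and `z ω±`. Since `|arg A| < π - φ₀` and `|arg z| < φ`, the argument of
`D±` lies between those of `A` and `z`, and all these terms have arguments within
`β = 3(π - φ₀ + φ)/4 < π/2` of the direction `ψ = 3(arg A + arg z)/4`. Projecting onto that
direction bounds `|m|` below by `cos β` times the sum of the moduli of the terms: there is no
cancellation. Finally, two complex numbers whose arguments differ by at most `2π/3` satisfy
`|u| + |v| ≤ 2|u + v|`, which gives `|A| ≥ (|λ| + κ)/2` and `|D±| ≥ (|A| + c±|z|)/2` and turns the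
moduli into the bracket of the statement.
-/

open Real

noncomputable def omegaPM (cpm κ : ℝ) (l z : ℂ) : ℂ :=
  (l + (κ : ℂ) + (cpm : ℂ) * z) ^ ((1 : ℂ) / 2)

/-- The Stefan symbol
`m(λ,z) = λ+κ + (σz + δ(λ+κ))(√c₊ω₊ + √c₋ω₋) + a₊√c₊ω₊ + a₋√c₋ω₋`. -/
noncomputable def stefanSymbol (cP cM κ δ σ aP aM : ℝ) (l z : ℂ) : ℂ :=
  l + (κ : ℂ)
  + ((σ : ℂ) * z + (δ : ℂ) * (l + (κ : ℂ))) *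
      ((Real.sqrt cP : ℂ) * omegaPM cP κ l z + (Real.sqrt cM : ℂ) * omegaPM cM κ l z)
  + (aP : ℂ) * (Real.sqrt cP : ℂ) * omegaPM cP κ l z
  + (aM : ℂ) * (Real.sqrt cM : ℂ) * omegaPM cM κ l z

open Complex

theorem abs_sub_half_add_left (x y : ℝ) : |x - (x + y) / 2| = |x - y| / 2 := by
  rw [show x - (x + y) / 2 = (x - y) / 2 by ring, abs_div, abs_two]

theorem abs_sub_half_add_right (x y : ℝ) : |y - (x + y) / 2| = |x - y| / 2 := by
  rw [add_comm x, abs_sub_half_add_left, abs_sub_comm]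

noncomputable def componentAlong (ψ : ℝ) (w : ℂ) : ℝ := (cexp (-(ψ * I)) * w).re

theorem componentAlong_add (ψ : ℝ) (u v : ℂ) :
    componentAlong ψ (u + v) = componentAlong ψ u + componentAlong ψ v := by
  simp only [componentAlong, mul_add, add_re]

theorem componentAlong_ofReal_mul (ψ r : ℝ) (w : ℂ) :
    componentAlong ψ (r * w) = r * componentAlong ψ w := by
  rw [componentAlong, componentAlong, mul_left_comm, re_ofReal_mul]

theorem componentAlong_le_norm (ψ : ℝ) (w : ℂ) : componentAlong ψ w ≤ ‖w‖ := by
  have hrot : ‖cexp (-(ψ * I))‖ = 1 := by simp [Complex.norm_exp]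
  calc componentAlong ψ w ≤ ‖cexp (-(ψ * I)) * w‖ := re_le_norm _
    _ = ‖w‖ := by rw [norm_mul, hrot, one_mul]

theorem componentAlong_eq (ψ : ℝ) (w : ℂ) :
    componentAlong ψ w = ‖w‖ * Real.cos (arg w - ψ) := by
  rw [componentAlong]
  conv_lhs => rw [← norm_mul_exp_arg_mul_I w]
  rw [mul_left_comm, ← Complex.exp_add, show -(ψ * I) + arg w * I = ((arg w - ψ : ℝ) : ℂ) * I by
    push_cast; ring, re_ofReal_mul, exp_ofReal_mul_I_re]

theorem cos_mul_norm_le_componentAlong {w : ℂ} {ψ β : ℝ} (hβ : β ≤ π)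
    (h : |arg w - ψ| ≤ β) : Real.cos β * ‖w‖ ≤ componentAlong ψ w := by
  rw [componentAlong_eq, mul_comm, ← Real.cos_abs (arg w - ψ)]
  exact mul_le_mul_of_nonneg_left
    (Real.cos_le_cos_of_nonneg_of_le_pi (abs_nonneg _) hβ h) (norm_nonneg w)

theorem abs_arg_sub_le_of_cos_mul_norm_le_componentAlong {w : ℂ} {ψ β : ℝ} (hw : w ≠ 0)
    (hψ : |ψ| < π / 2) (hβ₀ : 0 ≤ β) (hβ : β < π / 2)
    (h : Real.cos β * ‖w‖ ≤ componentAlong ψ w) : |arg w - ψ| ≤ β := by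
  rw [componentAlong_eq, mul_comm, ← Real.cos_abs (arg w - ψ)] at h
  have hcos : Real.cos β ≤ Real.cos |arg w - ψ| := le_of_mul_le_mul_left h (norm_pos_iff.mpr hw)
  by_contra! hlt
  have hlt' : |arg w - ψ| < π + π / 2 := by
    have := neg_pi_lt_arg w; have := arg_le_pi w
    rw [abs_lt] at hψ; rw [abs_lt]; constructor <;> linarith
  rcases le_or_gt |arg w - ψ| π with hπ | hπ
  · exact (Real.cos_lt_cos_of_nonneg_of_le_pi hβ₀ hπ hlt).not_ge hcos
  · have hneg := Real.cos_neg_of_pi_div_two_lt_of_lt (by linarith [pi_pos]) hlt'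
    have hpos := Real.cos_pos_of_mem_Ioo ⟨by linarith, hβ⟩
    linarith

theorem cos_mul_add_norm_le_componentAlong {u v : ℂ} {ψ β : ℝ} (hβ : β ≤ π)
    (hu : |arg u - ψ| ≤ β) (hv : |arg v - ψ| ≤ β) :
    Real.cos β * (‖u‖ + ‖v‖) ≤ componentAlong ψ (u + v) := by
  rw [mul_add, componentAlong_add]
  exact add_le_add (cos_mul_norm_le_componentAlong hβ hu) (cos_mul_norm_le_componentAlong hβ hv)

theorem abs_arg_add_sub_le {u v : ℂ} {ψ β : ℝ} (hu₀ : u ≠ 0) (hψ : |ψ| < π / 2)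
    (hβ₀ : 0 ≤ β) (hβ : β < π / 2) (hu : |arg u - ψ| ≤ β) (hv : |arg v - ψ| ≤ β) :
    u + v ≠ 0 ∧ |arg (u + v) - ψ| ≤ β := by
  have hsum := cos_mul_add_norm_le_componentAlong (by linarith [pi_pos]) hu hv
  have hcos : 0 < Real.cos β := Real.cos_pos_of_mem_Ioo ⟨by linarith, hβ⟩
  have hne : u + v ≠ 0 := by
    rintro h
    have := componentAlong_le_norm ψ (u + v)
    rw [h, norm_zero] at this; rw [h] at hsum
    nlinarith [norm_pos_iff.mpr hu₀, norm_nonneg v]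
  refine ⟨hne, abs_arg_sub_le_of_cos_mul_norm_le_componentAlong hne hψ hβ₀ hβ (le_trans ?_ hsum)⟩
  exact mul_le_mul_of_nonneg_left (norm_add_le u v) hcos.le

theorem abs_arg_add_ofReal_le {l : ℂ} {κ : ℝ} (hκ : 0 < κ) (hl : |arg l| < π) :
    l + κ ≠ 0 ∧ |arg (l + κ)| ≤ |arg l| := by
  have hκarg : arg (κ : ℂ) = 0 := arg_ofReal_of_nonneg hκ.le
  obtain ⟨hne, hle⟩ := abs_arg_add_sub_le (ψ := arg l / 2) (β := |arg l| / 2)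
    (ofReal_ne_zero.mpr hκ.ne') (by rw [abs_div, abs_two]; linarith) (by positivity)
    (by linarith) (by rw [hκarg, zero_sub, abs_neg, abs_div, abs_two])
    (by rw [show arg l - arg l / 2 = arg l / 2 by ring, abs_div, abs_two])
  rw [add_comm] at hne hle
  refine ⟨hne, ?_⟩
  have := abs_sub_abs_le_abs_sub (arg (l + κ)) (arg l / 2)
  rw [abs_div, abs_two] at this
  linarith

theorem norm_add_norm_le_two_mul_norm_add {u v : ℂ} (h : |arg u - arg v| ≤ 2 * π / 3) :
    ‖u‖ + ‖v‖ ≤ 2 * ‖u + v‖ := by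
  have hcos : 1 / 2 ≤ Real.cos (|arg u - arg v| / 2) := by
    rw [← Real.cos_pi_div_three]
    exact Real.cos_le_cos_of_nonneg_of_le_pi (by positivity) (by linarith [pi_pos]) (by linarith)
  have hsum := cos_mul_add_norm_le_componentAlong (by linarith [pi_pos])
    (abs_sub_half_add_left (arg u) (arg v)).le (abs_sub_half_add_right (arg u) (arg v)).le
  have hnorm := componentAlong_le_norm ((arg u + arg v) / 2) (u + v)
  nlinarith [norm_nonneg u, norm_nonneg v]

theorem norm_add_ofReal_le {l : ℂ} {κ : ℝ} (hκ : 0 ≤ κ) (hl : |arg l| ≤ 2 * π / 3) :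
    ‖l‖ + κ ≤ 2 * ‖l + κ‖ := by
  have := norm_add_norm_le_two_mul_norm_add (u := l) (v := κ)
    (by rwa [arg_ofReal_of_nonneg hκ, sub_zero])
  rwa [norm_real, Real.norm_of_nonneg hκ] at this

theorem norm_cpow_one_div_two (w : ℂ) : ‖w ^ ((1 : ℂ) / 2)‖ = √‖w‖ := by
  have := norm_cpow_inv_nat w 2
  push_cast at this
  rw [one_div, this, Real.sqrt_eq_rpow, one_div]

theorem arg_cpow_one_div_two (w : ℂ) : arg (w ^ ((1 : ℂ) / 2)) = arg w / 2 := by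
  rcases eq_or_ne w 0 with rfl | hw
  · simp
  rw [cpow_def_of_ne_zero hw, Complex.log, show ((Real.log ‖w‖ : ℂ) + arg w * I) * (1 / 2)
      = ((Real.log ‖w‖ / 2 : ℝ) : ℂ) + ((arg w / 2 : ℝ) : ℂ) * I by push_cast; ring,
    Complex.exp_add, ← ofReal_exp, exp_mul_I]
  refine arg_mul_cos_add_sin_mul_I (Real.exp_pos _) ⟨?_, ?_⟩
  · linarith [neg_pi_lt_arg w, pi_pos]
  · linarith [arg_le_pi w, pi_pos]

theorem sqrt_add_sqrt_add_sqrt_le {x y w : ℝ} (hx : 0 ≤ x) (hy : 0 ≤ y) (hw : 0 ≤ w) :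
    √x + √y + √w ≤ 2 * √(x + y + w) := by
  rw [show 2 * √(x + y + w) = √(4 * (x + y + w)) by
    rw [Real.sqrt_mul (by norm_num), show (4 : ℝ) = 2 ^ 2 by norm_num, Real.sqrt_sq two_pos.le]]
  apply Real.le_sqrt_of_sq_le
  nlinarith [Real.sq_sqrt hx, Real.sq_sqrt hy, Real.sq_sqrt hw,
    sq_nonneg (√x - √y), sq_nonneg (√x - √w), sq_nonneg (√y - √w)]

theorem sqrt_add_le_four_mul_sqrt_norm_add {l A z : ℂ} {κ c : ℝ} (hκ : 0 ≤ κ) (hc : 0 < c)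
    (hlA : ‖l‖ + κ ≤ 2 * ‖A‖) (hAz : |arg A - arg z| ≤ 2 * π / 3) :
    √‖l‖ + √κ + √(c * ‖z‖) ≤ 4 * √‖A + c * z‖ := by
  have hD := norm_add_norm_le_two_mul_norm_add (u := A) (v := c * z)
    (by rwa [arg_real_mul z hc])
  rw [norm_mul, norm_real, Real.norm_of_nonneg hc.le] at hD
  have hcz : 0 ≤ c * ‖z‖ := by positivity
  calc √‖l‖ + √κ + √(c * ‖z‖) ≤ 2 * √(‖l‖ + κ + c * ‖z‖) :=
        sqrt_add_sqrt_add_sqrt_le (norm_nonneg l) hκ hcz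
    _ ≤ 2 * √(2 ^ 2 * ‖A + c * z‖) := by gcongr; linarith
    _ = 4 * √‖A + c * z‖ := by
        rw [Real.sqrt_mul (by positivity), Real.sqrt_sq two_pos.le]; ring

theorem angle_bounds_of_abs_sub_mean_le {Θ φ θ α γ : ℝ} (hθ : |θ| < Θ) (hα : |α| < φ)
    (hΘφ : Θ + φ < 2 * π / 3) (hγ : |γ - (θ + α) / 2| ≤ |θ - α| / 2) :
    |θ - 3 * (θ + α) / 4| ≤ 3 * (Θ + φ) / 4 ∧ |γ / 2 - 3 * (θ + α) / 4| ≤ 3 * (Θ + φ) / 4 ∧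
      |θ + γ / 2 - 3 * (θ + α) / 4| ≤ 3 * (Θ + φ) / 4 ∧
      |α + γ / 2 - 3 * (θ + α) / 4| ≤ 3 * (Θ + φ) / 4 ∧
      θ + γ / 2 ∈ Set.Ioc (-π) π ∧ α + γ / 2 ∈ Set.Ioc (-π) π := by
  rw [abs_lt] at hθ hα
  rw [abs_le] at hγ
  simp only [abs_le, Set.mem_Ioc]
  rcases abs_cases (θ - α) with ⟨h, -⟩ | ⟨h, -⟩ <;> rw [h] at hγ <;>
    refine ⟨⟨?_, ?_⟩, ⟨?_, ?_⟩, ⟨?_, ?_⟩, ⟨?_, ?_⟩, ⟨?_, ?_⟩, ⟨?_, ?_⟩⟩ <;>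
    linarith [pi_pos]

theorem cos_mul_le_componentAlong_mul_cpow {A z : ℂ} {Θ φ c σ δ a : ℝ} (hA₀ : A ≠ 0)
    (hz₀ : z ≠ 0) (hA : |arg A| < Θ) (hz : |arg z| < φ) (hΘφ : Θ + φ < 2 * π / 3) (hc : 0 < c)
    (hσ : 0 ≤ σ) (hδ : 0 ≤ δ) (ha : 0 ≤ a) :
    Real.cos (3 * (Θ + φ) / 4) * ((σ * ‖z‖ + δ * ‖A‖ + a) * √‖A + c * z‖)
      ≤ componentAlong (3 * (arg A + arg z) / 4)
          ((σ * z + δ * A + a) * (A + c * z) ^ ((1 : ℂ) / 2)) := by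
  have hAz : |arg A - arg z| < Θ + φ := (abs_sub _ _).trans_lt (add_lt_add hA hz)
  obtain ⟨hD₀, hγ⟩ := abs_arg_add_sub_le (u := A) (v := c * z) (ψ := (arg A + arg z) / 2)
    (β := |arg A - arg z| / 2) hA₀
    (by rw [abs_div, abs_two]; linarith [abs_add_le (arg A) (arg z), pi_pos]) (by positivity)
    (by linarith [pi_pos]) (abs_sub_half_add_left _ _).le
    (by rw [arg_real_mul z hc]; exact (abs_sub_half_add_right _ _).le)
  obtain ⟨-, hwω, hwAω, hwzω, hAω, hzω⟩ := angle_bounds_of_abs_sub_mean_le hA hz hΘφ hγ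
  set ω := (A + c * z) ^ ((1 : ℂ) / 2)
  have hω : ‖ω‖ = √‖A + c * z‖ := norm_cpow_one_div_two _
  have hωarg : arg ω = arg (A + c * z) / 2 := arg_cpow_one_div_two _
  have hω₀ : ω ≠ 0 := by
    rw [← norm_pos_iff, hω]; exact Real.sqrt_pos.mpr (norm_pos_iff.mpr hD₀)
  have hβ : 3 * (Θ + φ) / 4 ≤ π := by linarith [pi_pos]
  have tω := cos_mul_norm_le_componentAlong hβ (hωarg ▸ hwω)
  have tAω := cos_mul_norm_le_componentAlong (w := A * ω) hβ
    (by rwa [arg_mul hA₀ hω₀ (hωarg ▸ hAω), hωarg])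
  have tzω := cos_mul_norm_le_componentAlong (w := z * ω) hβ
    (by rwa [arg_mul hz₀ hω₀ (hωarg ▸ hzω), hωarg])
  rw [norm_mul, hω] at tAω tzω
  rw [hω] at tω
  rw [show ((σ : ℂ) * z + δ * A + a) * ω = σ * (z * ω) + δ * (A * ω) + a * ω by ring,
    componentAlong_add, componentAlong_add, componentAlong_ofReal_mul,
    componentAlong_ofReal_mul, componentAlong_ofReal_mul]
  nlinarith [mul_le_mul_of_nonneg_left tzω hσ, mul_le_mul_of_nonneg_left tAω hδ,
    mul_le_mul_of_nonneg_left tω ha]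

theorem cos_mul_le_norm_stefanSymbol {cP cM κ δ σ aP aM Θ φ : ℝ} {l z : ℂ} (hcP : 0 < cP)
    (hcM : 0 < cM) (hδ : 0 ≤ δ) (hσ : 0 ≤ σ) (haP : 0 ≤ aP) (haM : 0 ≤ aM)
    (hΘφ : Θ + φ < 2 * π / 3) (hA₀ : l + κ ≠ 0) (hA : |arg (l + κ)| < Θ) (hz₀ : z ≠ 0)
    (hz : |arg z| < φ) :
    Real.cos (3 * (Θ + φ) / 4) * (‖l + κ‖
        + √cP * ((σ * ‖z‖ + δ * ‖l + κ‖ + aP) * √‖l + κ + cP * z‖)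
        + √cM * ((σ * ‖z‖ + δ * ‖l + κ‖ + aM) * √‖l + κ + cM * z‖))
      ≤ ‖stefanSymbol cP cM κ δ σ aP aM l z‖ := by
  set ψ := 3 * (arg (l + κ) + arg z) / 4
  have hm : stefanSymbol cP cM κ δ σ aP aM l z = (l + κ)
      + √cP * ((σ * z + δ * (l + κ) + aP) * (l + κ + cP * z) ^ ((1 : ℂ) / 2))
      + √cM * ((σ * z + δ * (l + κ) + aM) * (l + κ + cM * z) ^ ((1 : ℂ) / 2)) := by
    simp only [stefanSymbol, omegaPM]; ring
  have tA := cos_mul_norm_le_componentAlong (w := l + κ) (ψ := ψ) (by linarith [pi_pos])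
    (angle_bounds_of_abs_sub_mean_le hA hz hΘφ (abs_sub_half_add_left _ _).le).1
  have tP := cos_mul_le_componentAlong_mul_cpow hA₀ hz₀ hA hz hΘφ hcP hσ hδ haP
  have tM := cos_mul_le_componentAlong_mul_cpow hA₀ hz₀ hA hz hΘφ hcM hσ hδ haM
  calc _ ≤ componentAlong ψ (stefanSymbol cP cM κ δ σ aP aM l z) := by
        rw [hm, componentAlong_add, componentAlong_add, componentAlong_ofReal_mul,
          componentAlong_ofReal_mul]
        nlinarith [mul_le_mul_of_nonneg_left tP (Real.sqrt_nonneg cP),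
          mul_le_mul_of_nonneg_left tM (Real.sqrt_nonneg cM)]
    _ ≤ _ := componentAlong_le_norm _ _

theorem norm_stefanSymbol_ge {cP cM κ δ σ aP aM Θ φ : ℝ} {l z : ℂ} (hcP : 0 < cP)
    (hcM : 0 < cM) (hκ : 0 < κ) (hδ : 0 ≤ δ) (hσ : 0 ≤ σ) (haP : 0 ≤ aP) (haM : 0 ≤ aM)
    (hΘφ : Θ + φ < 2 * π / 3) (hl : |arg l| < Θ) (hz₀ : z ≠ 0) (hz : |arg z| < φ) :
    Real.cos (3 * (Θ + φ) / 4) * min (1 / 2) (min (√cP / 8) (√cM / 8)) *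
        (‖l‖ + κ + σ * ‖z‖ * (√‖l‖ + √κ + √(cP * ‖z‖) + √(cM * ‖z‖))
          + δ * (‖l‖ + κ) * (√‖l‖ + √κ + √(cP * ‖z‖) + √(cM * ‖z‖))
          + aP * (√‖l‖ + √κ + √(cP * ‖z‖)) + aM * (√‖l‖ + √κ + √(cM * ‖z‖)))
      ≤ ‖stefanSymbol cP cM κ δ σ aP aM l z‖ := by
  have hφ : 0 < φ := (abs_nonneg _).trans_lt hz
  obtain ⟨hA₀, hAl⟩ := abs_arg_add_ofReal_le (l := l) hκ (by linarith [pi_pos])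
  have hA : |arg (l + κ)| < Θ := hAl.trans_lt hl
  have hX : ‖l‖ + κ ≤ 2 * ‖l + κ‖ := norm_add_ofReal_le hκ.le (by linarith)
  have hAz : |arg (l + κ) - arg z| ≤ 2 * π / 3 := by linarith [abs_sub (arg (l + κ)) (arg z)]
  have hSP := sqrt_add_le_four_mul_sqrt_norm_add hκ.le hcP hX hAz
  have hSM := sqrt_add_le_four_mul_sqrt_norm_add hκ.le hcM hX hAz
  have hcos : 0 ≤ Real.cos (3 * (Θ + φ) / 4) :=
    Real.cos_nonneg_of_mem_Icc ⟨by linarith [pi_pos, abs_nonneg (arg l)], by linarith⟩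
  refine le_trans ?_ (cos_mul_le_norm_stefanSymbol hcP hcM hδ hσ haP haM hΘφ hA₀ hA hz₀ hz)
  rw [mul_assoc]
  refine mul_le_mul_of_nonneg_left ?_ hcos
  set μ := min (1 / 2) (min (√cP / 8) (√cM / 8))
  have hμ : 0 ≤ μ := by positivity
  have hμ1 : μ ≤ 1 / 2 := min_le_left _ _
  have hμP : μ ≤ √cP / 8 := (min_le_right _ _).trans (min_le_left _ _)
  have hμM : μ ≤ √cM / 8 := (min_le_right _ _).trans (min_le_right _ _)
  have hS0 : 0 ≤ √‖l‖ + √κ := by positivity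
  have hσz : 0 ≤ σ * ‖z‖ := by positivity
  have hcoef : ∀ a : ℝ, 0 ≤ a →
      σ * ‖z‖ + δ * (‖l‖ + κ) + a ≤ 2 * (σ * ‖z‖ + δ * ‖l + κ‖ + a) := by
    intro a ha; nlinarith [mul_le_mul_of_nonneg_left hX hδ]
  have hμX : μ * (‖l‖ + κ) ≤ ‖l + κ‖ := by
    nlinarith [mul_le_mul_of_nonneg_right hμ1 (by positivity : 0 ≤ ‖l‖ + κ)]
  have hP : μ * ((σ * ‖z‖ + δ * (‖l‖ + κ) + aP) * (√‖l‖ + √κ + √(cP * ‖z‖)))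
      ≤ √cP * ((σ * ‖z‖ + δ * ‖l + κ‖ + aP) * √‖l + κ + cP * z‖) :=
    calc _ ≤ √cP / 8 * ((2 * (σ * ‖z‖ + δ * ‖l + κ‖ + aP)) * (4 * √‖l + κ + cP * z‖)) := by
          gcongr; exact hcoef aP haP
      _ = _ := by ring
  have hM : μ * ((σ * ‖z‖ + δ * (‖l‖ + κ) + aM) * (√‖l‖ + √κ + √(cM * ‖z‖)))
      ≤ √cM * ((σ * ‖z‖ + δ * ‖l + κ‖ + aM) * √‖l + κ + cM * z‖) :=
    calc _ ≤ √cM / 8 * ((2 * (σ * ‖z‖ + δ * ‖l + κ‖ + aM)) * (4 * √‖l + κ + cM * z‖)) := by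
          gcongr; exact hcoef aM haM
      _ = _ := by ring
  nlinarith [mul_nonneg hμ (mul_nonneg hσz hS0),
    mul_nonneg hμ (mul_nonneg (mul_nonneg hδ (by positivity : 0 ≤ ‖l‖ + κ)) hS0)]

theorem stmt4 (cP cM c₀ aP aM δs σs φ₀ φ : ℝ)
    (hcP : 0 < cP) (hcM : 0 < cM) (hc₀ : 0 < c₀) (haP : c₀ ≤ aP) (haM : c₀ ≤ aM)
    (hφ₀ : φ₀ ∈ Set.Ioo (π / 3) (π / 2)) (hφ : φ ∈ Set.Ioo 0 (φ₀ - π / 3)) :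
    ∃ c₂ > (0 : ℝ), ∀ (l z : ℂ) (δ σ κ : ℝ), 1 ≤ κ →
      δ ∈ Set.Icc (0 : ℝ) δs → σ ∈ Set.Icc (0 : ℝ) σs →
      l ≠ 0 → |l.arg| < π - φ₀ → z ≠ 0 → |z.arg| < φ →
      c₂ * (‖l‖ + κ
          + σ * ‖z‖ * (Real.sqrt (‖l‖) + Real.sqrt κ
              + Real.sqrt (cP * ‖z‖) + Real.sqrt (cM * ‖z‖))
          + δ * (‖l‖ + κ) * (Real.sqrt (‖l‖) + Real.sqrt κ
              + Real.sqrt (cP * ‖z‖) + Real.sqrt (cM * ‖z‖))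
          + aP * (Real.sqrt (‖l‖) + Real.sqrt κ + Real.sqrt (cP * ‖z‖))
          + aM * (Real.sqrt (‖l‖) + Real.sqrt κ + Real.sqrt (cM * ‖z‖)))
        ≤ ‖stefanSymbol cP cM κ δ σ aP aM l z‖ := by
  have hΘφ : π - φ₀ + φ < 2 * π / 3 := by linarith [hφ₀.1, hφ.2]
  refine ⟨Real.cos (3 * (π - φ₀ + φ) / 4) * min (1 / 2) (min (√cP / 8) (√cM / 8)), ?_, ?_⟩
  · have hcos : 0 < Real.cos (3 * (π - φ₀ + φ) / 4) :=
      Real.cos_pos_of_mem_Ioo ⟨by linarith [pi_pos, hφ₀.2, hφ.1], by linarith⟩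
    positivity
  intro l z δ σ κ hκ hδ hσ _ hl hz₀ hz
  exact norm_stefanSymbol_ge hcP hcM (by linarith) hδ.1 hσ.1 (hc₀.le.trans haP)
    (hc₀.le.trans haM) hΘφ hl hz₀ hz
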